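/- arXiv:1009.0163 — 4 statements merged into one kernel-verified Lean document; each statement's English description precedes it below -/
import Mathlib

section
/- Let 𝐚, 𝐛 > 0 be such that θ := 𝐛/𝐚 is a Roth number, and let u := (𝐚,𝐛)/√(𝐚²+𝐛²), v := (−𝐛,𝐚)/√(𝐚²+𝐛²). Then for every ε > 0 there exists K_ε > 0 such that for all (n,m) ∈ ℤ² \ {(0,0)}: |⟨u,(n,m)⟩| ≥ K_ε/‖(n,m)‖^{1+ε} and |⟨v,(n,m)⟩| ≥ K_ε/‖(n,m)‖^{1+ε}, where ⟨·,·⟩ and ‖·‖ are the Euclidean inner product and norm on ℝ². -/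
open Real

noncomputable section

/-- A Roth number: an irrational `θ` such that for every `ε > 0` there is `C_ε > 0` with
`|θ − p/q| ≥ C_ε/q^{2+ε}` for all `p ∈ ℤ` and all integers `q ≥ 1`. -/
def IsRoth (θ : ℝ) : Prop :=
  Irrational θ ∧ ∀ ε : ℝ, 0 < ε → ∃ C : ℝ, 0 < C ∧
    ∀ p : ℤ, ∀ q : ℕ, 1 ≤ q → C / (q : ℝ) ^ ((2:ℝ) + ε) ≤ |θ - (p : ℝ) / (q : ℝ)|

/-- Euclidean distance in `ℝ²` from a point to the punctured lattice `ℤ² \ {0}`. -/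
def dZ2 (x : ℝ × ℝ) : ℝ :=
  ⨅ p : {p : ℤ × ℤ // p ≠ 0},
    Real.sqrt ((x.1 - ((p : ℤ × ℤ).1 : ℝ)) ^ 2 + (x.2 - ((p : ℤ × ℤ).2 : ℝ)) ^ 2)


lemma roth_core (a b C ε : ℝ) (ha : 0 < a) (hb : 0 < b) (hC : 0 < C) (hε : 0 < ε)
    (hR : ∀ p : ℤ, ∀ q : ℕ, 1 ≤ q → C / (q : ℝ) ^ ((2:ℝ) + ε) ≤ |b / a - (p : ℝ) / (q : ℝ)|) :
    ∀ n m : ℤ, (n, m) ≠ (0, 0) →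
      min (min a b) (a * C) / Real.sqrt ((n : ℝ) ^ 2 + (m : ℝ) ^ 2) ^ ((1:ℝ) + ε)
        ≤ |a * (n : ℝ) + b * (m : ℝ)| := by
  intro n m hnm
  set M := min (min a b) (a * C) with hM
  have hMpos : 0 < M := by positivity
  set N := Real.sqrt ((n : ℝ) ^ 2 + (m : ℝ) ^ 2) with hN
  have hnm' : n ≠ 0 ∨ m ≠ 0 := by
    by_contra h
    push_neg at h
    exact hnm (by simp [h.1, h.2])
  have h1le : (1:ℝ) ≤ (n : ℝ) ^ 2 + (m : ℝ) ^ 2 := by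
    have : (1:ℤ) ≤ n ^ 2 + m ^ 2 := by
      rcases hnm' with h | h
      · nlinarith [Int.one_le_abs h, sq_abs n, sq_nonneg m, abs_nonneg n]
      · nlinarith [Int.one_le_abs h, sq_abs m, sq_nonneg n, abs_nonneg m]
    exact_mod_cast this
  have hN1 : 1 ≤ N := by
    rw [hN, show (1:ℝ) = Real.sqrt 1 by simp]
    exact Real.sqrt_le_sqrt h1le
  have hNpos : 0 < N := lt_of_lt_of_le one_pos hN1
  have hNpow1 : 1 ≤ N ^ ((1:ℝ) + ε) := Real.one_le_rpow hN1 (by linarith)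
  have hNpowpos : 0 < N ^ ((1:ℝ) + ε) := lt_of_lt_of_le one_pos hNpow1
  rcases eq_or_ne m 0 with hm | hm
  · -- m = 0, n ≠ 0
    have hn : n ≠ 0 := by rcases hnm' with h | h; exact h; exact absurd hm h
    have h1n : (1:ℝ) ≤ |(n:ℝ)| := by
      rw [← Int.cast_abs]; exact_mod_cast Int.one_le_abs hn
    calc M / N ^ ((1:ℝ) + ε) ≤ M := div_le_self hMpos.le hNpow1
      _ ≤ a := le_trans (min_le_left _ _) (min_le_left _ _)
      _ = a * 1 := by ring
      _ ≤ a * |(n:ℝ)| := by nlinarith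
      _ = |a * (n:ℝ) + b * (m:ℝ)| := by
          rw [hm]; push_cast; rw [mul_zero, add_zero, abs_mul, abs_of_pos ha]
  · -- m ≠ 0
    have habsm : (1:ℝ) ≤ |(m:ℝ)| := by
      rw [← Int.cast_abs]; exact_mod_cast Int.one_le_abs hm
    have hmpos : (0:ℝ) < |(m:ℝ)| := lt_of_lt_of_le one_pos habsm
    have hmne : ((m:ℝ)) ≠ 0 := by exact_mod_cast hm
    -- Roth bound for p/q = -n/m
    have key : C / |(m:ℝ)| ^ ((2:ℝ) + ε) ≤ |b / a - (-(n:ℝ) / (m:ℝ))| := by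
      rcases lt_or_gt_of_ne hm with hml | hmg
      · -- m < 0 : q = (-m).toNat, p = n
        have hq1 : 1 ≤ (-m).toNat := by omega
        have hqcast : (((-m).toNat : ℕ) : ℝ) = -(m:ℝ) := by
          have : ((-m).toNat : ℤ) = -m := Int.toNat_of_nonneg (by omega)
          exact_mod_cast this
        have := hR n (-m).toNat hq1
        rw [hqcast] at this
        have habs : |(m:ℝ)| = -(m:ℝ) := abs_of_neg (by exact_mod_cast hml)
        rw [habs, show -(n:ℝ)/(m:ℝ) = (n:ℝ)/(-(m:ℝ)) by rw [div_neg, neg_div]]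
        exact this
      · -- m > 0 : q = m.toNat, p = -n
        have hq1 : 1 ≤ m.toNat := by omega
        have hqcast : ((m.toNat : ℕ) : ℝ) = (m:ℝ) := by
          have : (m.toNat : ℤ) = m := Int.toNat_of_nonneg (by omega)
          exact_mod_cast this
        have := hR (-n) m.toNat hq1
        rw [hqcast] at this
        have habs : |(m:ℝ)| = (m:ℝ) := abs_of_pos (by exact_mod_cast hmg)
        rw [habs]
        push_cast at this
        exact this
    have hfact : |a * (n:ℝ) + b * (m:ℝ)| = a * |(m:ℝ)| * |b / a - (-(n:ℝ) / (m:ℝ))| := by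
      rw [show a * |(m:ℝ)| = |a * (m:ℝ)| by rw [abs_mul, abs_of_pos ha]]
      rw [← abs_mul]
      congr 1
      field_simp
      ring
    have hsplit : |(m:ℝ)| ^ ((2:ℝ) + ε) = |(m:ℝ)| * |(m:ℝ)| ^ ((1:ℝ) + ε) := by
      rw [show (2:ℝ) + ε = 1 + (1 + ε) by ring, Real.rpow_add hmpos, Real.rpow_one]
    have hmleN : |(m:ℝ)| ≤ N := by
      rw [hN]
      apply Real.le_sqrt' hmpos |>.mpr
      nlinarith [sq_abs ((m:ℝ)), sq_nonneg ((n:ℝ))]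
    have hpowle : |(m:ℝ)| ^ ((1:ℝ) + ε) ≤ N ^ ((1:ℝ) + ε) :=
      Real.rpow_le_rpow (abs_nonneg _) hmleN (by linarith)
    have hmpowpos : 0 < |(m:ℝ)| ^ ((1:ℝ) + ε) := Real.rpow_pos_of_pos hmpos _
    calc M / N ^ ((1:ℝ) + ε) ≤ (a * C) / N ^ ((1:ℝ) + ε) := by
          gcongr
          exact min_le_right _ _
      _ ≤ (a * C) / |(m:ℝ)| ^ ((1:ℝ) + ε) := by
          gcongr
      _ = a * |(m:ℝ)| * (C / |(m:ℝ)| ^ ((2:ℝ) + ε)) := by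
          rw [hsplit]; field_simp
      _ ≤ a * |(m:ℝ)| * |b / a - (-(n:ℝ) / (m:ℝ))| := by
          apply mul_le_mul_of_nonneg_left key (by positivity)
      _ = |a * (n:ℝ) + b * (m:ℝ)| := hfact.symm

theorem roth_projection_lower_bound' (a b : ℝ) (ha : 0 < a) (hb : 0 < b)
    (hθ : Irrational (b/a) ∧ ∀ ε : ℝ, 0 < ε → ∃ C : ℝ, 0 < C ∧
    ∀ p : ℤ, ∀ q : ℕ, 1 ≤ q → C / (q : ℝ) ^ ((2:ℝ) + ε) ≤ |b/a - (p : ℝ) / (q : ℝ)|) :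
    ∀ ε : ℝ, 0 < ε → ∃ K : ℝ, 0 < K ∧ ∀ n m : ℤ, (n, m) ≠ (0, 0) →
      K / Real.sqrt ((n : ℝ) ^ 2 + (m : ℝ) ^ 2) ^ ((1:ℝ) + ε) ≤
          |(a / Real.sqrt (a ^ 2 + b ^ 2)) * (n : ℝ)
            + (b / Real.sqrt (a ^ 2 + b ^ 2)) * (m : ℝ)|
      ∧ K / Real.sqrt ((n : ℝ) ^ 2 + (m : ℝ) ^ 2) ^ ((1:ℝ) + ε) ≤
          |(-b / Real.sqrt (a ^ 2 + b ^ 2)) * (n : ℝ)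
            + (a / Real.sqrt (a ^ 2 + b ^ 2)) * (m : ℝ)| := by
  intro ε hε
  obtain ⟨C, hC, hR⟩ := hθ.2 ε hε
  set s := Real.sqrt (a ^ 2 + b ^ 2) with hs
  have hspos : 0 < s := Real.sqrt_pos.mpr (by positivity)
  set M := min (min a b) (a * C) with hM
  have hMpos : 0 < M := by positivity
  refine ⟨M / s, by positivity, fun n m hnm => ?_⟩
  set N := Real.sqrt ((n : ℝ) ^ 2 + (m : ℝ) ^ 2) with hN
  have hNpowpos : 0 < N ^ ((1:ℝ) + ε) := by
    apply Real.rpow_pos_of_pos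
    rw [hN]
    apply Real.sqrt_pos.mpr
    rcases (by by_contra h; push_neg at h; exact hnm (by simp [h.1, h.2]) : n ≠ 0 ∨ m ≠ 0) with h | h
    · have : ((n:ℝ)) ≠ 0 := by exact_mod_cast h
      positivity
    · have : ((m:ℝ)) ≠ 0 := by exact_mod_cast h
      positivity
  have hKeq : M / s / N ^ ((1:ℝ) + ε) = (M / N ^ ((1:ℝ) + ε)) / s := by ring
  constructor
  · have h1 := roth_core a b C ε ha hb hC hε hR n m hnm
    have heq : |(a / s) * (n:ℝ) + (b / s) * (m:ℝ)| = |a * (n:ℝ) + b * (m:ℝ)| / s := by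
      rw [show (a / s) * (n:ℝ) + (b / s) * (m:ℝ) = (a * (n:ℝ) + b * (m:ℝ)) / s by ring,
        abs_div, abs_of_pos hspos]
    rw [heq, hKeq]
    exact div_le_div_of_nonneg_right h1 hspos.le
  · have hnm2 : (m, -n) ≠ ((0:ℤ), (0:ℤ)) := by
      intro h
      rw [Prod.mk.injEq] at h
      exact hnm (by rw [Prod.mk.injEq]; exact ⟨by omega, h.1⟩)
    have h1 := roth_core a b C ε ha hb hC hε hR m (-n) hnm2
    have hNsym : Real.sqrt ((m : ℝ) ^ 2 + ((-n : ℤ) : ℝ) ^ 2) = N := by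
      rw [hN]; push_cast; ring_nf
    rw [hNsym] at h1
    have heq : |(-b / s) * (n:ℝ) + (a / s) * (m:ℝ)| = |a * (m:ℝ) + b * ((-n:ℤ):ℝ)| / s := by
      rw [show (-b / s) * (n:ℝ) + (a / s) * (m:ℝ) = (a * (m:ℝ) + b * ((-n:ℤ):ℝ)) / s by push_cast; ring,
        abs_div, abs_of_pos hspos]
    rw [heq, hKeq]
    exact div_le_div_of_nonneg_right h1 hspos.le

/-- if `θ = 𝐛/𝐚` is a Roth number and `u, v` are the indicated unit vectors,
then for every `ε > 0` there is `K_ε > 0` with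
`|⟨u,(n,m)⟩| ≥ K_ε/‖(n,m)‖^{1+ε}` and `|⟨v,(n,m)⟩| ≥ K_ε/‖(n,m)‖^{1+ε}`
for all `(n,m) ∈ ℤ² \ {(0,0)}`. -/
theorem roth_projection_lower_bound (a b : ℝ) (ha : 0 < a) (hb : 0 < b)
    (hθ : IsRoth (b / a)) :
    ∀ ε : ℝ, 0 < ε → ∃ K : ℝ, 0 < K ∧ ∀ n m : ℤ, (n, m) ≠ (0, 0) →
      K / Real.sqrt ((n : ℝ) ^ 2 + (m : ℝ) ^ 2) ^ ((1:ℝ) + ε) ≤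
          |(a / Real.sqrt (a ^ 2 + b ^ 2)) * (n : ℝ)
            + (b / Real.sqrt (a ^ 2 + b ^ 2)) * (m : ℝ)|
      ∧ K / Real.sqrt ((n : ℝ) ^ 2 + (m : ℝ) ^ 2) ^ ((1:ℝ) + ε) ≤
          |(-b / Real.sqrt (a ^ 2 + b ^ 2)) * (n : ℝ)
            + (a / Real.sqrt (a ^ 2 + b ^ 2)) * (m : ℝ)| := by
  exact roth_projection_lower_bound' a b ha hb hθ
end
end

section
/- Let 𝐚, 𝐛 > 0 be such that θ := 𝐛/𝐚 is a Roth number, and let φ_t := (𝐚t, 𝐛t) ∈ ℝ². Then for every ε > 0 there exists K_ε > 0 such that for all t ≥ 0: d(φ_t, ℤ²_*) ≥ K_ε/(√2/2 + t·√(𝐚²+𝐛²))^{1+ε}, where ℤ²_* := ℤ² \ {(0,0)} and d denotes Euclidean distance in ℝ². -/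
open Real

noncomputable section

/-- Roth bound in linear-form shape: `aC/|p|^{1+ε} ≤ |b p − a q|` for `p ≠ 0`. -/
lemma roth_linear_form (a b C ε : ℝ) (ha : 0 < a)
    (h : ∀ p : ℤ, ∀ q : ℕ, 1 ≤ q → C / (q : ℝ) ^ ((2:ℝ) + ε) ≤ |b / a - (p : ℝ) / (q : ℝ)|)
    (p q : ℤ) (hp : p ≠ 0) (hε : 0 < ε) :
    a * C / |(p : ℝ)| ^ ((1:ℝ) + ε) ≤ |b * p - a * q| := by
  set n : ℕ := p.natAbs with hn
  have hn1 : 1 ≤ n := Int.natAbs_pos.mpr hp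
  have hnR : (n : ℝ) = |(p : ℝ)| := by
    rw [hn]
    push_cast [Nat.cast_natAbs]
    ring
  have hpR : (p : ℝ) ≠ 0 := Int.cast_ne_zero.mpr hp
  have hpabs : 0 < |(p : ℝ)| := abs_pos.mpr hpR
  -- choose numerator with matching sign
  set m : ℤ := q * Int.sign p with hm
  have hdiv : (m : ℝ) / (n : ℝ) = (q : ℝ) / (p : ℝ) := by
    rcases hp.lt_or_gt with h' | h'
    · have hs : Int.sign p = -1 := Int.sign_eq_neg_one_of_neg h'
      have hnp : (n : ℝ) = -(p : ℝ) := by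
        rw [hnR, abs_of_neg (by exact_mod_cast h')]
      rw [hm, hs, hnp]
      push_cast
      field_simp
    · have hs : Int.sign p = 1 := Int.sign_eq_one_of_pos h'
      have hnp : (n : ℝ) = (p : ℝ) := by
        rw [hnR, abs_of_pos (by exact_mod_cast h')]
      rw [hm, hs, hnp]
      push_cast
      ring
  have hroth := h m n hn1
  rw [hdiv] at hroth
  have heq : |b / a - (q : ℝ) / (p : ℝ)| = |b * p - a * q| / (a * |(p : ℝ)|) := by
    rw [show a * |(p : ℝ)| = |a * (p : ℝ)| by rw [abs_mul, abs_of_pos ha], ← abs_div]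
    congr 1
    field_simp
  rw [heq] at hroth
  -- now: C / n^(2+ε) ≤ |bp - aq| / (a |p|)
  have hpow : |(p : ℝ)| ^ ((2:ℝ) + ε) = |(p : ℝ)| * |(p : ℝ)| ^ ((1:ℝ) + ε) := by
    rw [show (2:ℝ) + ε = 1 + (1 + ε) by ring, Real.rpow_add hpabs, Real.rpow_one]
  rw [hnR, hpow] at hroth
  have hpow1 : (0:ℝ) < |(p : ℝ)| ^ ((1:ℝ) + ε) := Real.rpow_pos_of_pos hpabs _
  rw [div_le_div_iff₀ (by positivity) (by positivity)] at hroth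
  rw [div_le_iff₀ (by positivity)]
  nlinarith [hroth]

/-- if `θ = 𝐛/𝐚` is a Roth number and `φ_t = (𝐚t,𝐛t)`, then for every
`ε > 0` there is `K_ε > 0` with
`d(φ_t, ℤ²_*) ≥ K_ε/(√2/2 + t√(𝐚²+𝐛²))^{1+ε}` for all `t ≥ 0`. -/
theorem roth_flow_lattice_distance (a b : ℝ) (ha : 0 < a) (hb : 0 < b)
    (hθ : IsRoth (b / a)) :
    ∀ ε : ℝ, 0 < ε → ∃ K : ℝ, 0 < K ∧ ∀ t : ℝ, 0 ≤ t →
      K / (Real.sqrt 2 / 2 + t * Real.sqrt (a ^ 2 + b ^ 2)) ^ ((1:ℝ) + ε)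
        ≤ dZ2 (a * t, b * t) := by
  intro ε hε
  obtain ⟨hirr, hroth⟩ := hθ
  obtain ⟨C, hC, hCall⟩ := hroth ε hε
  set S := Real.sqrt (a ^ 2 + b ^ 2) with hSdef
  have hS0 : 0 < S := Real.sqrt_pos.mpr (by positivity)
  have hSsq : S ^ 2 = a ^ 2 + b ^ 2 := Real.sq_sqrt (by positivity)
  have haS : a ≤ S := by
    nlinarith [hSsq, Real.sqrt_nonneg (a ^ 2 + b ^ 2), sq_nonneg b]
  have h2 : (1:ℝ) ≤ Real.sqrt 2 := by
    nlinarith [Real.sq_sqrt (by norm_num : (0:ℝ) ≤ 2), Real.sqrt_nonneg 2]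
  have hhalf : (0:ℝ) < Real.sqrt 2 / 2 := by positivity
  have hhpow : (0:ℝ) < (Real.sqrt 2 / 2) ^ ((1:ℝ) + ε) :=
    Real.rpow_pos_of_pos hhalf _
  set K : ℝ := min ((1/2) * (Real.sqrt 2 / 2) ^ ((1:ℝ) + ε))
      (min ((a / S) * (Real.sqrt 2 / 2) ^ ((1:ℝ) + ε)) (a * C / S)) with hKdef
  have hK0 : 0 < K := by
    apply lt_min (by positivity)
    exact lt_min (by positivity) (by positivity)
  refine ⟨K, hK0, ?_⟩
  intro t ht
  set D := Real.sqrt 2 / 2 + t * S with hDdef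
  have hD0 : Real.sqrt 2 / 2 ≤ D := by
    rw [hDdef]; nlinarith
  have hDpos : 0 < D := lt_of_lt_of_le hhalf hD0
  have hDpow0 : 0 < D ^ ((1:ℝ) + ε) := Real.rpow_pos_of_pos hDpos _
  have hDpow : (Real.sqrt 2 / 2) ^ ((1:ℝ) + ε) ≤ D ^ ((1:ℝ) + ε) :=
    Real.rpow_le_rpow hhalf.le hD0 (by linarith)
  have hKD : K / D ^ ((1:ℝ) + ε) ≤ K / (Real.sqrt 2 / 2) ^ ((1:ℝ) + ε) := by
    gcongr
  haveI : Nonempty {p : ℤ × ℤ // p ≠ 0} := ⟨⟨(1, 0), by simp [Prod.ext_iff]⟩⟩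
  rw [dZ2]
  apply le_ciInf
  rintro ⟨⟨p, q⟩, hpq⟩
  simp only
  set E := Real.sqrt ((a * t - (p : ℝ)) ^ 2 + (b * t - (q : ℝ)) ^ 2) with hEdef
  have hE0 : 0 ≤ E := Real.sqrt_nonneg _
  -- perpendicular distance bound
  have hperp : |b * (p : ℝ) - a * (q : ℝ)| ≤ S * E := by
    have h1 : (b * (p : ℝ) - a * (q : ℝ)) ^ 2 ≤ (S * E) ^ 2 := by
      have hE2 : E ^ 2 = (a * t - (p : ℝ)) ^ 2 + (b * t - (q : ℝ)) ^ 2 :=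
        Real.sq_sqrt (by positivity)
      have hcs : (b * (p : ℝ) - a * (q : ℝ)) ^ 2
          ≤ (a ^ 2 + b ^ 2) * ((a * t - (p : ℝ)) ^ 2 + (b * t - (q : ℝ)) ^ 2) := by
        nlinarith [sq_nonneg (a * (a * t - (p : ℝ)) + b * (b * t - (q : ℝ)))]
      calc (b * (p : ℝ) - a * (q : ℝ)) ^ 2
          ≤ (a ^ 2 + b ^ 2) * ((a * t - (p : ℝ)) ^ 2 + (b * t - (q : ℝ)) ^ 2) := hcs
        _ = (S * E) ^ 2 := by rw [mul_pow, hSsq, hE2]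
    calc |b * (p : ℝ) - a * (q : ℝ)| = Real.sqrt ((b * (p : ℝ) - a * (q : ℝ)) ^ 2) :=
          (Real.sqrt_sq_eq_abs _).symm
      _ ≤ Real.sqrt ((S * E) ^ 2) := Real.sqrt_le_sqrt h1
      _ = S * E := Real.sqrt_sq (by positivity)
  rcases le_or_gt (1/2 : ℝ) E with hE | hE
  · -- far case
    calc K / D ^ ((1:ℝ) + ε) ≤ K / (Real.sqrt 2 / 2) ^ ((1:ℝ) + ε) := hKD
      _ ≤ ((1/2) * (Real.sqrt 2 / 2) ^ ((1:ℝ) + ε)) / (Real.sqrt 2 / 2) ^ ((1:ℝ) + ε) := by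
          gcongr
          exact min_le_left _ _
      _ = 1/2 := by field_simp
      _ ≤ E := hE
  · -- close case: |p| ≤ D
    have habs : |a * t - (p : ℝ)| ≤ E := by
      calc |a * t - (p : ℝ)| = Real.sqrt ((a * t - (p : ℝ)) ^ 2) :=
            (Real.sqrt_sq_eq_abs _).symm
        _ ≤ E := Real.sqrt_le_sqrt (by nlinarith [sq_nonneg (b * t - (q : ℝ))])
    have hpD : |(p : ℝ)| ≤ D := by
      have : |(p : ℝ)| ≤ a * t + 1/2 := by
        have := abs_sub_abs_le_abs_sub (p : ℝ) (a * t)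
        rw [abs_sub_comm] at this
        have h3 : |a * t| = a * t := abs_of_nonneg (by positivity)
        linarith [habs, hE.le]
      have hat : a * t ≤ t * S := by
        rw [mul_comm]; exact mul_le_mul_of_nonneg_left haS ht
      rw [hDdef]; linarith
    rcases eq_or_ne p 0 with hp0 | hp0
    · -- p = 0, q ≠ 0
      have hq0 : q ≠ 0 := by
        intro hq0; exact hpq (by simp [hp0, hq0, Prod.ext_iff])
      have hq1 : (1:ℝ) ≤ |(q : ℝ)| := by
        have h4 : (1:ℤ) ≤ |q| := Int.one_le_abs hq0
        exact_mod_cast h4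
      have hperp0 : a ≤ S * E := by
        have : |b * (p : ℝ) - a * (q : ℝ)| = a * |(q : ℝ)| := by
          rw [hp0]; push_cast; rw [show b * 0 - a * (q:ℝ) = -(a * (q:ℝ)) by ring,
            abs_neg, abs_mul, abs_of_pos ha]
        calc a = a * 1 := (mul_one a).symm
          _ ≤ a * |(q : ℝ)| := mul_le_mul_of_nonneg_left hq1 ha.le
          _ = |b * (p : ℝ) - a * (q : ℝ)| := this.symm
          _ ≤ S * E := hperp
      calc K / D ^ ((1:ℝ) + ε) ≤ K / (Real.sqrt 2 / 2) ^ ((1:ℝ) + ε) := hKD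
        _ ≤ ((a / S) * (Real.sqrt 2 / 2) ^ ((1:ℝ) + ε)) / (Real.sqrt 2 / 2) ^ ((1:ℝ) + ε) := by
            gcongr
            exact le_trans (min_le_right _ _) (min_le_left _ _)
        _ = a / S := by field_simp
        _ ≤ E := by
            rw [div_le_iff₀ hS0, mul_comm]
            exact hperp0
    · -- p ≠ 0: Roth estimate
      have hlin := roth_linear_form a b C ε ha hCall p q hp0 hε
      have hpabs : 0 < |(p : ℝ)| := abs_pos.mpr (Int.cast_ne_zero.mpr hp0)
      have hppow : |(p : ℝ)| ^ ((1:ℝ) + ε) ≤ D ^ ((1:ℝ) + ε) :=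
        Real.rpow_le_rpow hpabs.le hpD (by linarith)
      have hmain : a * C / D ^ ((1:ℝ) + ε) ≤ S * E := by
        calc a * C / D ^ ((1:ℝ) + ε) ≤ a * C / |(p : ℝ)| ^ ((1:ℝ) + ε) := by gcongr
          _ ≤ |b * (p : ℝ) - a * (q : ℝ)| := hlin
          _ ≤ S * E := hperp
      calc K / D ^ ((1:ℝ) + ε) ≤ (a * C / S) / D ^ ((1:ℝ) + ε) := by
            gcongr
            exact le_trans (min_le_right _ _) (min_le_right _ _)
        _ ≤ E := by
            rw [div_div, div_le_iff₀ (by positivity)]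
            rw [div_le_iff₀ hDpow0] at hmain
            calc a * C ≤ S * E * D ^ ((1:ℝ) + ε) := hmain
              _ = E * (S * D ^ ((1:ℝ) + ε)) := by ring
end
end

section
/- Let 𝐚, 𝐛 > 0, θ := 𝐛/𝐚, φ_t := (𝐚t, 𝐛t), and let D be the line {(x, θx) : x ∈ ℝ} in ℝ². Let p ∈ ℕ and q ∈ ℕ, q ≥ 1, satisfy |θ − p/q| ≤ 1/q². Set τ := (𝐚q + 𝐛p)/(𝐚² + 𝐛²). Then φ_τ is the orthogonal projection of the point (q,p) onto D (equivalently, τ is the unique t > 0 with ⟨φ_t, (q,p) − φ_t⟩ = 0), and d(φ_τ, ℤ²_*) ≤ d(φ_τ,(q,p)) ≤ (𝐚/√(𝐚²+𝐛²))·(1/q) < 1/q, where ℤ²_* := ℤ² \ {(0,0)} and d denotes Euclidean distance in ℝ². -/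
open Real

noncomputable section

/-- with `|θ − p/q| ≤ 1/q²` and `τ = (𝐚q+𝐛p)/(𝐚²+𝐛²)`, the point `φ_τ` is
the orthogonal projection of `(q,p)` on the line `y = θx` (equivalently `τ` is the unique
`t > 0` with `⟨φ_t,(q,p)−φ_t⟩ = 0`), and
`d(φ_τ,ℤ²_*) ≤ d(φ_τ,(q,p)) ≤ (𝐚/√(𝐚²+𝐛²))(1/q) < 1/q`. -/
theorem approach_time_projection (a b : ℝ) (ha : 0 < a) (hb : 0 < b)
    (p q : ℕ) (hq : 1 ≤ q)
    (happrox : |b / a - (p : ℝ) / (q : ℝ)| ≤ 1 / (q : ℝ) ^ 2)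
    (τ : ℝ) (hτ : τ = (a * (q : ℝ) + b * (p : ℝ)) / (a ^ 2 + b ^ 2)) :
    0 < τ
    ∧ a * τ * ((q : ℝ) - a * τ) + b * τ * ((p : ℝ) - b * τ) = 0
    ∧ (∀ t : ℝ, 0 < t → a * t * ((q : ℝ) - a * t) + b * t * ((p : ℝ) - b * t) = 0 → t = τ)
    ∧ dZ2 (a * τ, b * τ) ≤ Real.sqrt ((a * τ - (q : ℝ)) ^ 2 + (b * τ - (p : ℝ)) ^ 2)
    ∧ Real.sqrt ((a * τ - (q : ℝ)) ^ 2 + (b * τ - (p : ℝ)) ^ 2)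
        ≤ (a / Real.sqrt (a ^ 2 + b ^ 2)) * (1 / (q : ℝ))
    ∧ (a / Real.sqrt (a ^ 2 + b ^ 2)) * (1 / (q : ℝ)) < 1 / (q : ℝ) := by
  have hs : (0:ℝ) < a ^ 2 + b ^ 2 := by positivity
  have hq0 : (0:ℝ) < q := by exact_mod_cast hq
  have hp0 : (0:ℝ) ≤ p := Nat.cast_nonneg p
  have hnum : 0 < a * (q:ℝ) + b * (p:ℝ) := by nlinarith [mul_pos ha hq0, mul_nonneg hb.le hp0]
  have hτpos : 0 < τ := by rw [hτ]; positivity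
  set r := Real.sqrt (a ^ 2 + b ^ 2) with hrdef
  have hr2 : r ^ 2 = a ^ 2 + b ^ 2 := Real.sq_sqrt hs.le
  have hr0 : 0 < r := Real.sqrt_pos.mpr hs
  have hX : (a * τ - (q:ℝ)) ^ 2 + (b * τ - (p:ℝ)) ^ 2
      = (a * (p:ℝ) - b * (q:ℝ)) ^ 2 / (a ^ 2 + b ^ 2) := by
    rw [hτ]; field_simp; ring
  have h2 : (b / a - (p:ℝ) / (q:ℝ)) ^ 2 ≤ (1 / (q:ℝ) ^ 2) ^ 2 := by
    have := pow_le_pow_left₀ (abs_nonneg _) happrox 2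
    rwa [sq_abs] at this
  have hkey : (a * (p:ℝ) - b * (q:ℝ)) ^ 2 ≤ a ^ 2 / (q:ℝ) ^ 2 := by
    have h3 : (b * (q:ℝ) - a * (p:ℝ)) ^ 2
        = (a * (q:ℝ)) ^ 2 * (b / a - (p:ℝ) / (q:ℝ)) ^ 2 := by
      field_simp
    rw [le_div_iff₀ (by positivity : (0:ℝ) < (q:ℝ) ^ 2), show (a * (p:ℝ) - b * (q:ℝ)) ^ 2
        = (b * (q:ℝ) - a * (p:ℝ)) ^ 2 by ring, h3]
    have h5 := mul_le_mul_of_nonneg_left h2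
      (by positivity : (0:ℝ) ≤ (a * (q:ℝ)) ^ 2 * (q:ℝ) ^ 2)
    have h6 : (a * (q:ℝ)) ^ 2 * (q:ℝ) ^ 2 * (1 / (q:ℝ) ^ 2) ^ 2 = a ^ 2 := by
      field_simp
    nlinarith [h5, h6]
  refine ⟨hτpos, ?_, ?_, ?_, ?_, ?_⟩
  · rw [hτ]; field_simp; ring
  · intro t ht h0
    rw [hτ, eq_div_iff hs.ne']
    have h1 : t * (t * (a ^ 2 + b ^ 2)) = t * (a * (q:ℝ) + b * (p:ℝ)) := by
      linear_combination -h0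
    exact mul_left_cancel₀ ht.ne' h1
  · have hne : (((q:ℤ), (p:ℤ)) : ℤ × ℤ) ≠ 0 := by
      intro h
      rw [Prod.ext_iff] at h
      have : (q:ℤ) = 0 := h.1
      omega
    have hb1 : BddBelow (Set.range fun p : {p : ℤ × ℤ // p ≠ 0} =>
        Real.sqrt (((a * τ, b * τ).1 - ((p : ℤ × ℤ).1 : ℝ)) ^ 2
          + ((a * τ, b * τ).2 - ((p : ℤ × ℤ).2 : ℝ)) ^ 2)) := by
      refine ⟨0, ?_⟩
      rintro x ⟨i, rfl⟩
      positivity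
    have := ciInf_le hb1 (⟨((q:ℤ), (p:ℤ)), hne⟩ : {p : ℤ × ℤ // p ≠ 0})
    simpa [dZ2] using this
  · have hR : (0:ℝ) ≤ a / r * (1 / (q:ℝ)) := by positivity
    rw [show a / r * (1 / (q:ℝ)) = Real.sqrt ((a / r * (1 / (q:ℝ))) ^ 2) from
      (Real.sqrt_sq hR).symm]
    apply Real.sqrt_le_sqrt
    have : (a / r * (1 / (q:ℝ))) ^ 2 = a ^ 2 / ((a ^ 2 + b ^ 2) * (q:ℝ) ^ 2) := by
      rw [mul_pow, div_pow, div_pow, hr2]; field_simp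
    rw [this, hX]
    rw [div_le_div_iff₀ hs (by positivity)]
    calc (a * (p:ℝ) - b * (q:ℝ)) ^ 2 * ((a ^ 2 + b ^ 2) * (q:ℝ) ^ 2)
        ≤ a ^ 2 / (q:ℝ) ^ 2 * ((a ^ 2 + b ^ 2) * (q:ℝ) ^ 2) := by
          exact mul_le_mul_of_nonneg_right hkey (by positivity)
      _ = a ^ 2 * (a ^ 2 + b ^ 2) := by field_simp
  · have har : a < r := by nlinarith
    have : a / r < 1 := (div_lt_one hr0).mpr har
    calc a / r * (1 / (q:ℝ)) < 1 * (1 / (q:ℝ)) :=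
          mul_lt_mul_of_pos_right this (by positivity)
      _ = 1 / (q:ℝ) := one_mul _
end
end

section
/- Let 𝐚, 𝐛 > 0, θ := 𝐛/𝐚, φ_t := (𝐚t, 𝐛t). Let p ∈ ℕ and q ∈ ℕ, q ≥ 1, satisfy |θ − p/q| ≤ 1/q², and set τ := (𝐚q + 𝐛p)/(𝐚² + 𝐛²). Then for every r > 0 and every t ∈ [τ − r, τ + r] with t ≥ 0: d(φ_t, ℤ²_*) ≤ (1/(𝐚²+𝐛²))·√((𝐚𝐛/q + r𝐚(𝐚²+𝐛²))² + (𝐚²/q + r𝐛(𝐚²+𝐛²))²), where ℤ²_* := ℤ² \ {(0,0)} and d denotes Euclidean distance in ℝ². -/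
open Real

noncomputable section

/-- with `|θ − p/q| ≤ 1/q²` and `τ = (𝐚q+𝐛p)/(𝐚²+𝐛²)`, for every `r > 0`
and every `t ∈ [τ−r,τ+r]` with `t ≥ 0`,
`d(φ_t,ℤ²_*) ≤ (1/(𝐚²+𝐛²))√((𝐚𝐛/q + r𝐚(𝐚²+𝐛²))² + (𝐚²/q + r𝐛(𝐚²+𝐛²))²)`. -/
theorem approach_time_neighbourhood (a b : ℝ) (ha : 0 < a) (hb : 0 < b)
    (p q : ℕ) (hq : 1 ≤ q)
    (happrox : |b / a - (p : ℝ) / (q : ℝ)| ≤ 1 / (q : ℝ) ^ 2)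
    (τ : ℝ) (hτ : τ = (a * (q : ℝ) + b * (p : ℝ)) / (a ^ 2 + b ^ 2)) :
    ∀ r : ℝ, 0 < r → ∀ t : ℝ, t ∈ Set.Icc (τ - r) (τ + r) → 0 ≤ t →
      dZ2 (a * t, b * t)
        ≤ (1 / (a ^ 2 + b ^ 2)) *
          Real.sqrt ((a * b / (q : ℝ) + r * a * (a ^ 2 + b ^ 2)) ^ 2
            + (a ^ 2 / (q : ℝ) + r * b * (a ^ 2 + b ^ 2)) ^ 2) := by
  intro r hr t ht ht0
  have hS : (0:ℝ) < a ^ 2 + b ^ 2 := by positivity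
  have hq0 : (0:ℝ) < (q:ℝ) := by exact_mod_cast hq
  set S := a ^ 2 + b ^ 2 with hSdef
  -- step 1: dZ2 ≤ distance to (q, p)
  have hne : ((q:ℤ), (p:ℤ)) ≠ (0 : ℤ × ℤ) := by
    intro h
    have : (q:ℤ) = 0 := congrArg Prod.fst h
    omega
  have key : dZ2 (a * t, b * t) ≤
      Real.sqrt ((a * t - (q:ℝ)) ^ 2 + (b * t - (p:ℝ)) ^ 2) := by
    have := ciInf_le (f := fun p : {p : ℤ × ℤ // p ≠ 0} =>
      Real.sqrt ((a * t - ((p : ℤ × ℤ).1 : ℝ)) ^ 2 + (b * t - ((p : ℤ × ℤ).2 : ℝ)) ^ 2))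
      (c := ⟨((q:ℤ), (p:ℤ)), hne⟩) ⟨0, by rintro x ⟨i, rfl⟩; exact Real.sqrt_nonneg _⟩
    simpa [dZ2] using this
  -- bounds on coordinates
  have htr : |t - τ| ≤ r := by
    rw [abs_le]; constructor <;> [linarith [ht.1]; linarith [ht.2]]
  have hD : |b * (q:ℝ) - a * (p:ℝ)| ≤ a / (q:ℝ) := by
    have : |b * (q:ℝ) - a * (p:ℝ)| = a * (q:ℝ) * |b / a - (p:ℝ) / (q:ℝ)| := by
      rw [← abs_of_pos (mul_pos ha hq0), ← abs_mul]
      congr 1; field_simp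
    rw [this]
    calc a * (q:ℝ) * |b / a - (p:ℝ) / (q:ℝ)| ≤ a * (q:ℝ) * (1 / (q:ℝ) ^ 2) := by
          exact mul_le_mul_of_nonneg_left happrox (by positivity)
      _ = a / (q:ℝ) := by field_simp
  have h1 : |a * t - (q:ℝ)| ≤ a * b / (q:ℝ) / S + r * a := by
    have e1 : a * t - (q:ℝ) = a * (t - τ) + b * (a * (p:ℝ) - b * (q:ℝ)) / S := by
      rw [hτ]; field_simp; ring
    rw [e1]
    calc |a * (t - τ) + b * (a * (p:ℝ) - b * (q:ℝ)) / S|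
        ≤ |a * (t - τ)| + |b * (a * (p:ℝ) - b * (q:ℝ)) / S| := abs_add_le _ _
      _ ≤ a * r + b * (a / (q:ℝ)) / S := by
          gcongr
          · rw [abs_mul, abs_of_pos ha]; gcongr
          · rw [abs_div, abs_of_pos hS, abs_mul, abs_of_pos hb, abs_sub_comm]
            gcongr
      _ = a * b / (q:ℝ) / S + r * a := by ring
  have h2 : |b * t - (p:ℝ)| ≤ a ^ 2 / (q:ℝ) / S + r * b := by
    have e2 : b * t - (p:ℝ) = b * (t - τ) + a * (b * (q:ℝ) - a * (p:ℝ)) / S := by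
      rw [hτ]; field_simp; ring
    rw [e2]
    calc |b * (t - τ) + a * (b * (q:ℝ) - a * (p:ℝ)) / S|
        ≤ |b * (t - τ)| + |a * (b * (q:ℝ) - a * (p:ℝ)) / S| := abs_add_le _ _
      _ ≤ b * r + a * (a / (q:ℝ)) / S := by
          gcongr
          · rw [abs_mul, abs_of_pos hb]; gcongr
          · rw [abs_div, abs_of_pos hS, abs_mul, abs_of_pos ha]
            gcongr
      _ = a ^ 2 / (q:ℝ) / S + r * b := by ring
  have sq1 : (a * t - (q:ℝ)) ^ 2 ≤ (a * b / (q:ℝ) / S + r * a) ^ 2 := by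
    rw [← sq_abs]; gcongr
  have sq2 : (b * t - (p:ℝ)) ^ 2 ≤ (a ^ 2 / (q:ℝ) / S + r * b) ^ 2 := by
    rw [← sq_abs]; gcongr
  have step2 : Real.sqrt ((a * t - (q:ℝ)) ^ 2 + (b * t - (p:ℝ)) ^ 2) ≤
      Real.sqrt ((a * b / (q:ℝ) / S + r * a) ^ 2 + (a ^ 2 / (q:ℝ) / S + r * b) ^ 2) := by
    apply Real.sqrt_le_sqrt; linarith
  have final : (1 / S) * Real.sqrt ((a * b / (q:ℝ) + r * a * S) ^ 2
      + (a ^ 2 / (q:ℝ) + r * b * S) ^ 2)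
      = Real.sqrt ((a * b / (q:ℝ) / S + r * a) ^ 2 + (a ^ 2 / (q:ℝ) / S + r * b) ^ 2) := by
    rw [show (1 / S) * Real.sqrt ((a * b / (q:ℝ) + r * a * S) ^ 2
        + (a ^ 2 / (q:ℝ) + r * b * S) ^ 2)
        = Real.sqrt ((1 / S) ^ 2 * ((a * b / (q:ℝ) + r * a * S) ^ 2
        + (a ^ 2 / (q:ℝ) + r * b * S) ^ 2)) by
      rw [Real.sqrt_mul (by positivity), Real.sqrt_sq (by positivity)]]
    congr 1
    field_simp
  rw [final]
  exact key.trans step2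
end
end
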